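/- arXiv:2209.07400 — 5 statements merged into one kernel-verified Lean document; each statement's English description precedes it below -/
import Mathlib

section
/- Privacy of the Gaussian mechanism (zCDP form). Let n be a positive integer, ρ > 0, and let μ₁, μ₂ ∈ ℝ satisfy |μ₁ − μ₂| ≤ 1/n (the sensitivity of a statistical query on neighboring datasets of size n). Set v = 1/(2n²ρ). Then for every α ∈ (1, ∞), ∫_ℝ p_{μ₁,v}(x)^α · p_{μ₂,v}(x)^{1−α} dx ≤ exp((α−1) · α · ρ), i.e., the α-Rényi divergence between N(μ₁, v) and N(μ₂, v) is at most ρα for every α ∈ (1, ∞); hence releasing q(D) + Z with Z ∼ N(0, 1/(2n²ρ)) satisfies ρ-zCDP. -/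
open MeasureTheory Real

noncomputable def gaussDensity (μ v x : ℝ) : ℝ :=
  (Real.sqrt (2 * π * v))⁻¹ * Real.exp (-(x - μ) ^ 2 / (2 * v))

/-! Completing the square, `p_{μ₁,v}^α p_{μ₂,v}^{1-α}` is a constant multiple of the Gaussian
density centred at `α μ₁ + (1 - α) μ₂`, so the Rényi integral equals
`exp (α (α - 1) (μ₁ - μ₂)² / (2 v))`. With `v = 1 / (2 n² ρ)` and `|μ₁ - μ₂| ≤ 1 / n` the exponent
is at most `α (α - 1) ρ`. -/

lemma gaussDensity_eq_gaussianPDFReal {v : ℝ} (hv : 0 ≤ v) (μ x : ℝ) :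
    gaussDensity μ v x = ProbabilityTheory.gaussianPDFReal μ ⟨v, hv⟩ x :=
  rfl

lemma integral_gaussDensity (μ : ℝ) {v : ℝ} (hv : 0 < v) : ∫ x, gaussDensity μ v x = 1 := by
  simp_rw [gaussDensity_eq_gaussianPDFReal hv.le]
  exact ProbabilityTheory.integral_gaussianPDFReal_eq_one μ (ne_of_gt hv)

lemma gaussDensity_rpow_mul_rpow (μ₁ μ₂ v α x : ℝ) :
    gaussDensity μ₁ v x ^ α * gaussDensity μ₂ v x ^ (1 - α) =
      exp (α * (α - 1) * (μ₁ - μ₂) ^ 2 / (2 * v)) *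
        gaussDensity (α * μ₁ + (1 - α) * μ₂) v x := by
  set s := (√(2 * π * v))⁻¹
  have hs : 0 ≤ s := by positivity
  have hs_rpow : s ^ α * s ^ (1 - α) = s := by
    rw [← rpow_add' hs (by norm_num), add_sub_cancel, rpow_one]
  have h_exponent : -(x - μ₁) ^ 2 / (2 * v) * α + -(x - μ₂) ^ 2 / (2 * v) * (1 - α) =
      α * (α - 1) * (μ₁ - μ₂) ^ 2 / (2 * v) + -(x - (α * μ₁ + (1 - α) * μ₂)) ^ 2 / (2 * v) := by
    ring
  calc gaussDensity μ₁ v x ^ α * gaussDensity μ₂ v x ^ (1 - α)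
      = (s ^ α * s ^ (1 - α)) *
          exp (-(x - μ₁) ^ 2 / (2 * v) * α + -(x - μ₂) ^ 2 / (2 * v) * (1 - α)) := by
        rw [gaussDensity, gaussDensity, mul_rpow hs (exp_pos _).le, mul_rpow hs (exp_pos _).le,
          ← exp_mul, ← exp_mul, exp_add]
        ring
    _ = _ := by
        rw [hs_rpow, h_exponent, exp_add, gaussDensity]
        ring

lemma integral_gaussDensity_rpow_mul_rpow (μ₁ μ₂ : ℝ) {v : ℝ} (hv : 0 < v) (α : ℝ) :
    ∫ x, gaussDensity μ₁ v x ^ α * gaussDensity μ₂ v x ^ (1 - α) =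
      exp (α * (α - 1) * (μ₁ - μ₂) ^ 2 / (2 * v)) := by
  simp_rw [gaussDensity_rpow_mul_rpow]
  rw [integral_const_mul, integral_gaussDensity _ hv, mul_one]

/-- Privacy of the Gaussian mechanism (zCDP form): if `|μ₁ - μ₂| ≤ 1/n` and
`v = 1/(2 n² ρ)`, then for every `α > 1`,
`∫ p_{μ₁,v}^α p_{μ₂,v}^{1-α} ≤ exp((α-1)·α·ρ)`. -/
theorem gaussian_mechanism_zCDP (n : ℕ) (hn : 0 < n) (ρ : ℝ) (hρ : 0 < ρ)
    (μ₁ μ₂ : ℝ) (hsens : |μ₁ - μ₂| ≤ 1 / n)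
    (v : ℝ) (hv : v = 1 / (2 * n ^ 2 * ρ)) :
    ∀ α : ℝ, 1 < α →
      ∫ x : ℝ, gaussDensity μ₁ v x ^ α * gaussDensity μ₂ v x ^ (1 - α) ≤
        Real.exp ((α - 1) * α * ρ) := by
  intro α hα
  have hn' : (0 : ℝ) < n := Nat.cast_pos.mpr hn
  have hv_pos : 0 < v := by rw [hv]; positivity
  rw [integral_gaussDensity_rpow_mul_rpow μ₁ μ₂ hv_pos, exp_le_exp]
  have h_dist : (μ₁ - μ₂) ^ 2 * n ^ 2 ≤ 1 := by
    have := pow_le_pow_left₀ (abs_nonneg _) hsens 2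
    rw [sq_abs, div_pow, one_pow, le_div_iff₀ (by positivity)] at this
    exact this
  have h_exponent : α * (α - 1) * (μ₁ - μ₂) ^ 2 / (2 * v) =
      (α - 1) * α * ρ * ((μ₁ - μ₂) ^ 2 * n ^ 2) := by
    rw [hv]; field_simp
  rw [h_exponent]
  exact mul_le_of_le_one_right (by positivity) h_dist
end

section
/- Conversion from pure differential privacy to zCDP. Let P and Q be probability measures on a measurable space, mutually absolutely continuous, and let ε > 0. Suppose that for every measurable set S, P(S) ≤ e^ε · Q(S) and Q(S) ≤ e^ε · P(S). Then for every α ∈ (1, ∞), ∫ (dP/dQ)^α dQ ≤ exp((α−1) · α · ε²/2), i.e., D_α(P‖Q) ≤ (ε²/2) · α for all α ∈ (1, ∞); hence ε-differential privacy implies (ε²/2)-zCDP. -/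
/-! The ε-DP condition pins the density `r = dP/dQ` a.e. into `[e^{-ε}, e^ε]`, and `∫ r dQ = 1`.
Among such densities the convex moment `∫ r^α dQ` is largest for the two-point law on the
endpoints, since the chord of `y ↦ y^α` over `[e^{-ε}, e^ε]` lies above it; that extremal value is
`cosh((2α-1)ε/2) / cosh(ε/2)`. Finally `cosh(kt) / cosh t ≤ exp((k²-1)t²/2)` for `k ≥ 1`, because
`x²/2 - log cosh x` is increasing on `[0, ∞)` (its derivative is `x - tanh x`). -/

open MeasureTheory Real Set
open scoped ENNReal

namespace MeasureTheory.Measure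

variable {Ω : Type*} [MeasurableSpace Ω] {μ ν : Measure Ω} {c : ℝ≥0∞}

lemma rnDeriv_le_of_forall_le_mul [SigmaFinite ν] (h : ∀ s, MeasurableSet s → μ s ≤ c * ν s) :
    μ.rnDeriv ν ≤ᵐ[ν] fun _ ↦ c :=
  ae_le_of_forall_setLIntegral_le_of_sigmaFinite (μ.measurable_rnDeriv ν) fun s hs _ ↦ by
    rw [setLIntegral_const]
    exact (setLIntegral_rnDeriv_le s).trans (h s hs)

lemma inv_le_rnDeriv_of_forall_le_mul [HaveLebesgueDecomposition μ ν] [SigmaFinite ν]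
    (hμν : μ ≪ ν) (h : ∀ s, MeasurableSet s → ν s ≤ c * μ s) :
    (fun _ ↦ c⁻¹) ≤ᵐ[ν] μ.rnDeriv ν :=
  ae_le_of_forall_setLIntegral_le_of_sigmaFinite measurable_const fun s hs _ ↦ by
    rw [setLIntegral_const, setLIntegral_rnDeriv hμν, mul_comm, ← div_eq_mul_inv]
    exact ENNReal.div_le_of_le_mul' (h s hs)

lemma toReal_rnDeriv_mem_Icc_of_forall_le_mul [SigmaFinite μ] [SigmaFinite ν] (hμν : μ ≪ ν)
    {c : ℝ} (hc : 0 < c) (h₁ : ∀ s, MeasurableSet s → μ s ≤ ENNReal.ofReal c * ν s)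
    (h₂ : ∀ s, MeasurableSet s → ν s ≤ ENNReal.ofReal c * μ s) :
    ∀ᵐ x ∂ν, (μ.rnDeriv ν x).toReal ∈ Icc c⁻¹ c := by
  filter_upwards [inv_le_rnDeriv_of_forall_le_mul hμν h₂, rnDeriv_le_of_forall_le_mul h₁,
    rnDeriv_ne_top μ ν] with x hlow hup hfin
  rw [← ENNReal.ofReal_inv_of_pos hc] at hlow
  exact ⟨(ENNReal.ofReal_le_iff_le_toReal hfin).1 hlow, ENNReal.toReal_le_of_le_ofReal hc.le hup⟩

end MeasureTheory.Measure

lemma ConvexOn.le_chord {f : ℝ → ℝ} {a b y : ℝ} (hf : ConvexOn ℝ (Icc a b) f) (hab : a < b)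
    (hy : y ∈ Icc a b) : f y ≤ ((b - y) * f a + (y - a) * f b) / (b - a) := by
  have hba : 0 < b - a := sub_pos.2 hab
  have h := hf.2 (left_mem_Icc.2 hab.le) (right_mem_Icc.2 hab.le)
    (div_nonneg (sub_nonneg.2 hy.2) hba.le) (div_nonneg (sub_nonneg.2 hy.1) hba.le)
    (by field_simp; ring)
  have hcomb : (b - y) / (b - a) * a + (y - a) / (b - a) * b = y := by field_simp; ring
  simp only [smul_eq_mul, hcomb] at h
  exact h.trans_eq (by field_simp)

theorem ConvexOn.integral_comp_le_chord {Ω : Type*} [MeasurableSpace Ω] {μ : Measure Ω}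
    [IsProbabilityMeasure μ] {f : ℝ → ℝ} {a b : ℝ} {X : Ω → ℝ} (hf : ConvexOn ℝ (Icc a b) f)
    (hab : a < b) (hX : ∀ᵐ ω ∂μ, X ω ∈ Icc a b) (hXint : Integrable X μ)
    (hfX : Integrable (fun ω ↦ f (X ω)) μ) :
    ∫ ω, f (X ω) ∂μ ≤ ((b - ∫ ω, X ω ∂μ) * f a + (∫ ω, X ω ∂μ - a) * f b) / (b - a) := by
  have hchord : Integrable (fun ω ↦ ((b - X ω) * f a + (X ω - a) * f b) / (b - a)) μ := by
    fun_prop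
  calc ∫ ω, f (X ω) ∂μ ≤ ∫ ω, ((b - X ω) * f a + (X ω - a) * f b) / (b - a) ∂μ :=
        integral_mono_ae hfX hchord (hX.mono fun ω hω ↦ hf.le_chord hab hω)
    _ = _ := by
        have hb : Integrable (fun ω ↦ (b - X ω) * f a) μ := by fun_prop
        have ha : Integrable (fun ω ↦ (X ω - a) * f b) μ := by fun_prop
        rw [integral_div, integral_add hb ha, integral_mul_const, integral_mul_const,
          integral_sub (integrable_const b) hXint, integral_sub hXint (integrable_const a)]
        simp

namespace Real

lemma sinh_le_mul_cosh {x : ℝ} (hx : 0 ≤ x) : sinh x ≤ x * cosh x := by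
  have hmono : MonotoneOn (fun y ↦ y * cosh y - sinh y) (Ici 0) := by
    refine monotoneOn_of_deriv_nonneg (convex_Ici 0) (by fun_prop) (by fun_prop) fun y hy ↦ ?_
    have hd : HasDerivAt (fun y ↦ y * cosh y - sinh y) (1 * cosh y + y * sinh y - cosh y) y :=
      ((hasDerivAt_id y).mul (hasDerivAt_cosh y)).sub (hasDerivAt_sinh y)
    rw [interior_Ici, mem_Ioi] at hy
    rw [hd.deriv]
    nlinarith [sinh_pos_iff.2 hy]
  simpa using hmono self_mem_Ici hx hx

lemma monotoneOn_sq_div_two_sub_log_cosh :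
    MonotoneOn (fun x ↦ x ^ 2 / 2 - log (cosh x)) (Ici 0) := by
  have hd : ∀ x, HasDerivAt (fun x ↦ x ^ 2 / 2 - log (cosh x)) (x - sinh x / cosh x) x := by
    intro x
    refine (((hasDerivAt_pow 2 x).div_const 2).sub
      ((hasDerivAt_cosh x).log (cosh_pos x).ne')).congr_deriv ?_
    norm_num
  refine monotoneOn_of_deriv_nonneg (convex_Ici 0)
    (fun x _ ↦ (hd x).continuousAt.continuousWithinAt)
    (fun x _ ↦ (hd x).differentiableAt.differentiableWithinAt) fun x hx ↦ ?_
  rw [interior_Ici, mem_Ioi] at hx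
  rw [(hd x).deriv, sub_nonneg, div_le_iff₀ (cosh_pos x)]
  exact sinh_le_mul_cosh hx.le

lemma cosh_mul_le {k : ℝ} (hk : 1 ≤ k) (t : ℝ) :
    cosh (k * t) ≤ cosh t * exp ((k ^ 2 - 1) * t ^ 2 / 2) := by
  have h := monotoneOn_sq_div_two_sub_log_cosh (abs_nonneg t)
    (mul_nonneg (zero_le_one.trans hk) (abs_nonneg t)) (le_mul_of_one_le_left (abs_nonneg t) hk)
  simp only [cosh_abs, mul_pow, sq_abs] at h
  rw [← cosh_abs (k * t), abs_mul, abs_of_nonneg (zero_le_one.trans hk), ← exp_log (cosh_pos _),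
    ← exp_log (cosh_pos t), ← exp_add, exp_le_exp]
  linarith

lemma chord_exp_rpow_eq {ε : ℝ} (hε : ε ≠ 0) (α : ℝ) :
    ((exp ε - 1) * exp (-ε) ^ α + (1 - exp (-ε)) * exp ε ^ α) / (exp ε - exp (-ε)) =
      cosh ((2 * α - 1) * (ε / 2)) / cosh (ε / 2) := by
  have h1 : exp ε = exp (ε / 2) ^ 2 := by rw [← exp_nat_mul]; ring_nf
  have h2 : exp (ε * α) = exp (ε / 2) * exp ((2 * α - 1) * (ε / 2)) := by rw [← exp_add]; ring_nf
  have h4 : exp (ε / 2) ^ 4 - 1 ≠ 0 := by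
    rw [sub_ne_zero, ← exp_nat_mul, Ne, exp_eq_one_iff]
    norm_num [hε]
  have hu := (exp_pos (ε / 2)).ne'
  have hv := (exp_pos ((2 * α - 1) * (ε / 2))).ne'
  rw [← exp_mul, neg_mul, exp_neg, exp_neg, ← exp_mul, h1, h2, cosh_eq, cosh_eq, exp_neg, exp_neg]
  generalize exp (ε / 2) = u at *
  generalize exp ((2 * α - 1) * (ε / 2)) = v at *
  -- numerator `(u - u⁻¹) (v + v⁻¹)`, denominator `(u - u⁻¹) (u + u⁻¹)`
  field_simp
  ring

end Real

theorem pureDP_to_zCDP_general {Ω : Type*} [MeasurableSpace Ω]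
    (P Q : Measure Ω) [IsProbabilityMeasure P] [IsProbabilityMeasure Q]
    (hPQ : P ≪ Q) (ε : ℝ) (hε : 0 < ε)
    (hDP₁ : ∀ S : Set Ω, MeasurableSet S → P S ≤ ENNReal.ofReal (Real.exp ε) * Q S)
    (hDP₂ : ∀ S : Set Ω, MeasurableSet S → Q S ≤ ENNReal.ofReal (Real.exp ε) * P S) :
    ∀ α : ℝ, 1 < α →
      ∫ x, (P.rnDeriv Q x).toReal ^ α ∂Q ≤ Real.exp ((α - 1) * α * ε ^ 2 / 2) := by
  intro α hα
  have hbounds : ∀ᵐ x ∂Q, (P.rnDeriv Q x).toReal ∈ Icc (exp (-ε)) (exp ε) := by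
    simpa only [exp_neg] using
      Measure.toReal_rnDeriv_mem_Icc_of_forall_le_mul hPQ (exp_pos ε) hDP₁ hDP₂
  have hconvex : ConvexOn ℝ (Icc (exp (-ε)) (exp ε)) fun y ↦ y ^ α :=
    (convexOn_rpow hα.le).subset (Icc_subset_Ici_self.trans (Ici_subset_Ici.2 (exp_pos _).le))
      (convex_Icc _ _)
  have hint : Integrable (fun x ↦ (P.rnDeriv Q x).toReal ^ α) Q := by
    have hmeas := (Measure.measurable_rnDeriv P Q).ennreal_toReal.pow_const α
    refine .of_bound hmeas.aestronglyMeasurable (exp ε ^ α) (hbounds.mono fun x hx ↦ ?_)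
    rw [norm_of_nonneg (rpow_nonneg ENNReal.toReal_nonneg α)]
    exact rpow_le_rpow ENNReal.toReal_nonneg hx.2 (by linarith)
  calc ∫ x, (P.rnDeriv Q x).toReal ^ α ∂Q
      ≤ ((exp ε - 1) * exp (-ε) ^ α + (1 - exp (-ε)) * exp ε ^ α) / (exp ε - exp (-ε)) := by
        simpa only [Measure.integral_toReal_rnDeriv hPQ, probReal_univ] using
          hconvex.integral_comp_le_chord (exp_lt_exp.2 (by linarith)) hbounds
            Measure.integrable_toReal_rnDeriv hint
    _ = cosh ((2 * α - 1) * (ε / 2)) / cosh (ε / 2) := chord_exp_rpow_eq hε.ne' α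
    _ ≤ exp ((α - 1) * α * ε ^ 2 / 2) := by
        rw [div_le_iff₀' (cosh_pos _)]
        have h := cosh_mul_le (by linarith : 1 ≤ 2 * α - 1) (ε / 2)
        rwa [show ((2 * α - 1) ^ 2 - 1) * (ε / 2) ^ 2 / 2 = (α - 1) * α * ε ^ 2 / 2 by ring] at h

/-- Conversion from pure differential privacy to zCDP: if `P(S) ≤ e^ε Q(S)` and
`Q(S) ≤ e^ε P(S)` for all measurable `S`, then for every `α ∈ (1,∞)`,
`∫ (dP/dQ)^α dQ ≤ exp((α-1)·α·ε²/2)`. -/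
theorem pureDP_to_zCDP {Ω : Type*} [MeasurableSpace Ω]
    (P Q : Measure Ω) [IsProbabilityMeasure P] [IsProbabilityMeasure Q]
    (hPQ : P ≪ Q) (hQP : Q ≪ P) (ε : ℝ) (hε : 0 < ε)
    (hDP₁ : ∀ S : Set Ω, MeasurableSet S → P S ≤ ENNReal.ofReal (Real.exp ε) * Q S)
    (hDP₂ : ∀ S : Set Ω, MeasurableSet S → Q S ≤ ENNReal.ofReal (Real.exp ε) * P S) :
    ∀ α : ℝ, 1 < α →
      ∫ x, (P.rnDeriv Q x).toReal ^ α ∂Q ≤ Real.exp ((α - 1) * α * ε ^ 2 / 2) :=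
  pureDP_to_zCDP_general P Q hPQ ε hε hDP₁ hDP₂
end

section
/- Gumbel-max trick. Let m ≥ 1, β > 0, y : Fin m → ℝ, fix j ∈ Fin m, and let P be the product on (Fin m → ℝ) of m independent copies of the Gumbel measure with scale β. Then P({ z : Fin m → ℝ | ∀ i ≠ j, y(j) + z(j) > y(i) + z(i) }) = exp(y(j)/β) / Σ_{i} exp(y(i)/β). In particular, the index maximizing the Gumbel-perturbed scores is distributed according to the softmax of y at temperature β. -/
/-!
Conditioning on the `j`-th coordinate `t`, the event says that each other coordinate `z i`
lies below `t + y j - y i`, so by independence its probability is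
`∫ ∏_{i ≠ j} F (t + y j - y i) dG(t)`, where `F x = exp (-exp (-x / β))` is the Gumbel
distribution function. The product equals `exp (-K exp (-t / β))` with
`K = ∑_{i ≠ j} exp ((y i - y j) / β)`; against the Gumbel density the integrand is the
derivative of `exp (-(1 + K) exp (-t / β)) / (1 + K)`, so the integral is `1 / (1 + K)`, which
is the softmax weight of `j`.
-/

open MeasureTheory Real

/-- The Gumbel measure with scale `β`, given by its Lebesgue density
`z ↦ (1/β) exp(−z/β − exp(−z/β))`. -/
noncomputable def gumbelMeasure (β : ℝ) : Measure ℝ :=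
  volume.withDensity fun z =>
    ENNReal.ofReal ((1 / β) * Real.exp (-z / β - Real.exp (-z / β)))

open Set Filter Topology Finset

theorem measure_pi_setOf_forall_ne_mem {ι α : Type*} [Fintype ι] [DecidableEq ι]
    [MeasurableSpace α] (μ : Measure α) [SigmaFinite μ] (j : ι) (s : ι → α → Set α)
    (hs : ∀ i, MeasurableSet {p : α × α | p.2 ∈ s i p.1}) :
    Measure.pi (fun _ => μ) {z : ι → α | ∀ i, i ≠ j → z i ∈ s i (z j)} =
      ∫⁻ t, ∏ i ∈ univ.erase j, μ (s i t) ∂μ := by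
  have hmeas : MeasurableSet {z : ι → α | ∀ i, i ≠ j → z i ∈ s i (z j)} := by
    simp only [ofPred_forall]
    refine .iInter fun i => .iInter fun _ => ?_
    exact (hs i).preimage (f := fun z : ι → α => (z j, z i)) (by fun_prop)
  set e := MeasurableEquiv.piEquivPiSubtypeProd (fun _ : ι => α) (· = j)
  have hslice : ∀ a : {i // i = j} → α,
      Prod.mk a ⁻¹' (e.symm ⁻¹' {z | ∀ i, i ≠ j → z i ∈ s i (z j)}) =
        Set.pi univ (fun i : {i // i ≠ j} => s i (a ⟨j, rfl⟩)) := by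
    intro a
    ext b
    simp +contextual [e, MeasurableEquiv.piEquivPiSubtypeProd, Equiv.piEquivPiSubtypeProd]
  have he := (measurePreserving_piEquivPiSubtypeProd (fun _ => μ) (· = j)).symm e
  rw [← he.measure_preimage_equiv, Measure.prod_apply (e.symm.measurable hmeas)]
  simp only [hslice, Measure.pi_pi, prod_subtype (univ.erase j) (p := (· ≠ j)) (by simp)]
  convert (measurePreserving_funUnique μ {i // i = j}).lintegral_comp_emb
    (MeasurableEquiv.measurableEmbedding _) (fun t => ∏ i : {i // i ≠ j}, μ (s i t)) using 3
  rfl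

section FTC

variable {g g' : ℝ → ℝ} {a b : ℝ}

theorem integrable_deriv_of_nonneg_of_tendsto (hderiv : ∀ x, HasDerivAt g (g' x) x)
    (hg' : ∀ x, 0 ≤ g' x) (hbot : Tendsto g atBot (𝓝 a)) (htop : Tendsto g atTop (𝓝 b)) :
    Integrable g' := by
  refine integrable_of_intervalIntegral_norm_tendsto (b - a)
    (fun n : ℕ => intervalIntegral.integrableOn_deriv_of_nonneg
      (fun x _ => (hderiv x).continuousAt.continuousWithinAt) (fun x _ => hderiv x)
      (fun x _ => hg' x))
    (tendsto_neg_atTop_atBot.comp tendsto_natCast_atTop_atTop) tendsto_natCast_atTop_atTop ?_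
  have hnorm : ∀ n : ℕ, ∫ x in -(n : ℝ)..n, ‖g' x‖ = g n - g (-n) := fun n => by
    rw [show (fun x => ‖g' x‖) = g' from funext fun x => Real.norm_of_nonneg (hg' x)]
    exact intervalIntegral.integral_eq_sub_of_hasDerivAt (fun x _ => hderiv x)
      (intervalIntegral.intervalIntegrable_deriv_of_nonneg
        (fun x _ => (hderiv x).continuousAt.continuousWithinAt) (fun x _ => hderiv x)
        (fun x _ => hg' x))
  refine Tendsto.congr (fun n => (hnorm n).symm) ?_
  exact (htop.comp tendsto_natCast_atTop_atTop).sub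
    (hbot.comp (tendsto_neg_atTop_atBot.comp tendsto_natCast_atTop_atTop))

theorem lintegral_ofReal_deriv_of_nonneg (hderiv : ∀ x, HasDerivAt g (g' x) x)
    (hg' : ∀ x, 0 ≤ g' x) (hbot : Tendsto g atBot (𝓝 a)) (htop : Tendsto g atTop (𝓝 b)) :
    ∫⁻ x, ENNReal.ofReal (g' x) = ENNReal.ofReal (b - a) := by
  have hint := integrable_deriv_of_nonneg_of_tendsto hderiv hg' hbot htop
  rw [← ofReal_integral_eq_lintegral_ofReal hint (.of_forall hg'),
    integral_of_hasDerivAt_of_tendsto hderiv hint hbot htop]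

theorem setLIntegral_Iio_ofReal_deriv_of_nonneg (hderiv : ∀ x, HasDerivAt g (g' x) x)
    (hg' : ∀ x, 0 ≤ g' x) (hbot : Tendsto g atBot (𝓝 a)) (htop : Tendsto g atTop (𝓝 b))
    (c : ℝ) : ∫⁻ x in Iio c, ENNReal.ofReal (g' x) = ENNReal.ofReal (g c - a) := by
  have hint := integrable_deriv_of_nonneg_of_tendsto hderiv hg' hbot htop
  rw [← ofReal_integral_eq_lintegral_ofReal hint.integrableOn (.of_forall hg'),
    ← integral_Iic_eq_integral_Iio, integral_Iic_of_hasDerivAt_of_tendsto' (fun x _ => hderiv x)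
    hint.integrableOn hbot]

end FTC

section Gumbel

variable {β : ℝ}

instance gumbelMeasure.instSigmaFinite (β : ℝ) : SigmaFinite (gumbelMeasure β) := by
  unfold gumbelMeasure
  infer_instance

theorem hasDerivAt_exp_neg_mul_exp (β c t : ℝ) :
    HasDerivAt (fun t => exp (-(c * exp (-t / β))))
      (c / β * exp (-t / β - c * exp (-t / β))) t := by
  have hlin : HasDerivAt (fun t => -t / β) (-1 / β) t := by
    simpa using (hasDerivAt_id t).neg.div_const β
  refine ((hlin.exp.const_mul c).neg.exp).congr_deriv ?_
  simp only [Pi.neg_apply]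
  rw [sub_eq_add_neg, exp_add]
  ring

theorem tendsto_exp_neg_mul_exp_atTop (hβ : 0 < β) (c : ℝ) :
    Tendsto (fun t => exp (-(c * exp (-t / β)))) atTop (𝓝 1) := by
  have hinner : Tendsto (fun t => exp (-t / β)) atTop (𝓝 0) :=
    tendsto_exp_atBot.comp (tendsto_neg_atTop_atBot.atBot_div_const hβ)
  simpa using ((hinner.const_mul c).neg).rexp

theorem tendsto_exp_neg_mul_exp_atBot (hβ : 0 < β) {c : ℝ} (hc : 0 < c) :
    Tendsto (fun t => exp (-(c * exp (-t / β)))) atBot (𝓝 0) := by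
  have hinner : Tendsto (fun t => exp (-t / β)) atBot atTop :=
    tendsto_exp_atTop.comp (tendsto_neg_atBot_atTop.atTop_div_const hβ)
  exact tendsto_exp_atBot.comp (tendsto_neg_atTop_atBot.comp (hinner.const_mul_atTop hc))

theorem gumbelMeasure_Iio (hβ : 0 < β) (x : ℝ) :
    gumbelMeasure β (Iio x) = ENNReal.ofReal (exp (-exp (-x / β))) := by
  have h := setLIntegral_Iio_ofReal_deriv_of_nonneg (hasDerivAt_exp_neg_mul_exp β 1)
    (fun t => by positivity) (tendsto_exp_neg_mul_exp_atBot hβ one_pos)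
    (tendsto_exp_neg_mul_exp_atTop hβ 1) x
  simpa [gumbelMeasure, withDensity_apply _ measurableSet_Iio] using h

theorem lintegral_exp_neg_mul_exp_gumbelMeasure (hβ : 0 < β) {K : ℝ} (hK : -1 < K) :
    ∫⁻ t, ENNReal.ofReal (exp (-(K * exp (-t / β)))) ∂gumbelMeasure β =
      ENNReal.ofReal (1 / (1 + K)) := by
  have hc : 0 < 1 + K := by linarith
  have hdensity : ∀ t, ENNReal.ofReal (1 / β * exp (-t / β - exp (-t / β))) *
      ENNReal.ofReal (exp (-(K * exp (-t / β)))) = ENNReal.ofReal (1 / (1 + K)) *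
        ENNReal.ofReal ((1 + K) / β * exp (-t / β - (1 + K) * exp (-t / β))) := fun t => by
    rw [← ENNReal.ofReal_mul (by positivity), ← ENNReal.ofReal_mul (by positivity), mul_assoc,
      ← exp_add]
    field_simp
    ring_nf
  rw [gumbelMeasure, lintegral_withDensity_eq_lintegral_mul₀ (by fun_prop) (by fun_prop)]
  simp only [Pi.mul_apply, hdensity]
  rw [lintegral_const_mul' _ _ ENNReal.ofReal_ne_top, lintegral_ofReal_deriv_of_nonneg
    (hasDerivAt_exp_neg_mul_exp β (1 + K)) (fun t => by positivity)
    (tendsto_exp_neg_mul_exp_atBot hβ hc) (tendsto_exp_neg_mul_exp_atTop hβ (1 + K))]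
  simp

theorem prod_gumbelMeasure_Iio_add {ι : Type*} (hβ : 0 < β) (s : Finset ι) (a : ι → ℝ)
    (t : ℝ) :
    ∏ i ∈ s, gumbelMeasure β (Iio (t + a i)) =
      ENNReal.ofReal (exp (-((∑ i ∈ s, exp (-a i / β)) * exp (-t / β)))) := by
  simp_rw [gumbelMeasure_Iio hβ]
  rw [← ENNReal.ofReal_prod_of_nonneg (fun _ _ => (exp_pos _).le), ← exp_sum, sum_mul,
    ← sum_neg_distrib]
  congr 3 with i
  rw [← exp_add]
  ring_nf

end Gumbel

theorem exp_div_sum_exp_eq_one_div {ι : Type*} [Fintype ι] [DecidableEq ι] (y : ι → ℝ)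
    (β : ℝ) (j : ι) : exp (y j / β) / ∑ i, exp (y i / β) =
      1 / (1 + ∑ i ∈ univ.erase j, exp (-(y j - y i) / β)) := by
  have hsum : ∑ i, exp (y i / β) =
      exp (y j / β) * (1 + ∑ i ∈ univ.erase j, exp (-(y j - y i) / β)) := by
    rw [← add_sum_erase univ _ (mem_univ j), mul_add, mul_one, mul_sum]
    congr 1
    refine sum_congr rfl fun i _ => ?_
    rw [← exp_add]
    ring_nf
  rw [hsum]
  field_simp

theorem gumbel_max_trick_general (m : ℕ) (β : ℝ) (hβ : 0 < β)
    (y : Fin m → ℝ) (j : Fin m) :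
    Measure.pi (fun _ : Fin m => gumbelMeasure β)
        {z : Fin m → ℝ | ∀ i, i ≠ j → y j + z j > y i + z i} =
      ENNReal.ofReal (Real.exp (y j / β) / ∑ i, Real.exp (y i / β)) := by
  have hS : {z : Fin m → ℝ | ∀ i, i ≠ j → y j + z j > y i + z i} =
      {z | ∀ i, i ≠ j → z i ∈ Iio (z j + (y j - y i))} := by
    ext z
    refine forall₂_congr fun i _ => ?_
    rw [Set.mem_Iio]
    constructor <;> intro h <;> linarith
  have hK : -1 < ∑ i ∈ univ.erase j, exp (-(y j - y i) / β) := by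
    linarith [sum_nonneg fun i (_ : i ∈ univ.erase j) => (exp_pos (-(y j - y i) / β)).le]
  rw [hS, measure_pi_setOf_forall_ne_mem _ j (fun i t => Iio (t + (y j - y i)))
    fun _ => measurableSet_lt measurable_snd (measurable_fst.add_const _)]
  simp_rw [prod_gumbelMeasure_Iio_add hβ]
  rw [lintegral_exp_neg_mul_exp_gumbelMeasure hβ hK, exp_div_sum_exp_eq_one_div]

/-- Gumbel-max trick: under `m` independent Gumbel(β) perturbations, the probability
that index `j` has the strictly largest perturbed score equals the softmax of `y`
at temperature `β`. -/
theorem gumbel_max_trick (m : ℕ) (hm : 1 ≤ m) (β : ℝ) (hβ : 0 < β)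
    (y : Fin m → ℝ) (j : Fin m) :
    Measure.pi (fun _ : Fin m => gumbelMeasure β)
        {z : Fin m → ℝ | ∀ i, i ≠ j → y j + z j > y i + z i} =
      ENNReal.ofReal (Real.exp (y j / β) / ∑ i, Real.exp (y i / β)) :=
  gumbel_max_trick_general m β hβ y j
end

section
/- Softmax stability (core inequality of the exponential mechanism). Let m ≥ 1, β > 0, Δ ≥ 0, and let y, y' : Fin m → ℝ satisfy |y(i) − y'(i)| ≤ Δ for all i. Then for every j ∈ Fin m, exp(y(j)/β) / Σ_i exp(y(i)/β) ≤ exp(2Δ/β) · exp(y'(j)/β) / Σ_i exp(y'(i)/β). -/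
open Real Finset

noncomputable def softmax {ι : Type*} [Fintype ι] (x : ι → ℝ) (j : ι) : ℝ :=
  exp (x j) / ∑ i, exp (x i)

lemma exp_le_exp_mul_exp_of_abs_sub_le {a b c : ℝ} (h : |a - b| ≤ c) :
    exp a ≤ exp c * exp b := by
  rw [← exp_add]
  exact exp_le_exp.2 (by linarith [le_abs_self (a - b)])

/-- Perturbing every logit by at most `c` moves the numerator and the normalizer of the softmax
each by a factor of at most `exp c`. -/
theorem softmax_le_exp_mul_softmax {ι : Type*} [Fintype ι] {x x' : ι → ℝ} {c : ℝ}
    (h : ∀ i, |x i - x' i| ≤ c) (j : ι) :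
    softmax x j ≤ exp (2 * c) * softmax x' j := by
  have : Nonempty ι := ⟨j⟩
  have hS : 0 < ∑ i, exp (x i) := sum_pos (fun i _ => exp_pos _) univ_nonempty
  have hS' : 0 < ∑ i, exp (x' i) := sum_pos (fun i _ => exp_pos _) univ_nonempty
  have hnum : exp (x j) ≤ exp c * exp (x' j) := exp_le_exp_mul_exp_of_abs_sub_le (h j)
  have hnorm : ∑ i, exp (x' i) ≤ exp c * ∑ i, exp (x i) := by
    rw [mul_sum]
    exact sum_le_sum fun i _ => exp_le_exp_mul_exp_of_abs_sub_le (by rw [abs_sub_comm]; exact h i)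
  rw [softmax, softmax, ← mul_div_assoc, div_le_div_iff₀ hS hS']
  calc exp (x j) * ∑ i, exp (x' i)
      ≤ (exp c * exp (x' j)) * (exp c * ∑ i, exp (x i)) :=
        mul_le_mul hnum hnorm hS'.le (by positivity)
    _ = exp (2 * c) * exp (x' j) * ∑ i, exp (x i) := by rw [two_mul, exp_add]; ring

theorem softmax_stability_general (m : ℕ) (β Δ : ℝ) (hβ : 0 < β)
    (y y' : Fin m → ℝ) (hyy' : ∀ i, |y i - y' i| ≤ Δ) (j : Fin m) :
    Real.exp (y j / β) / ∑ i, Real.exp (y i / β) ≤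
      Real.exp (2 * Δ / β) * Real.exp (y' j / β) / ∑ i, Real.exp (y' i / β) := by
  have hscaled : ∀ i, |y i / β - y' i / β| ≤ Δ / β := fun i => by
    rw [← sub_div, abs_div, abs_of_pos hβ]
    exact div_le_div_of_nonneg_right (hyy' i) hβ.le
  simpa only [softmax, mul_div_assoc] using softmax_le_exp_mul_softmax hscaled j

/-- Softmax stability (core inequality of the exponential mechanism): if
`|y i − y' i| ≤ Δ` for all `i`, then the softmax probabilities at temperature `β`
differ by a multiplicative factor of at most `exp(2Δ/β)`. -/
theorem softmax_stability (m : ℕ) (hm : 1 ≤ m) (β Δ : ℝ) (hβ : 0 < β) (hΔ : 0 ≤ Δ)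
    (y y' : Fin m → ℝ) (hyy' : ∀ i, |y i - y' i| ≤ Δ) (j : Fin m) :
    Real.exp (y j / β) / ∑ i, Real.exp (y i / β) ≤
      Real.exp (2 * Δ / β) * Real.exp (y' j / β) / ∑ i, Real.exp (y' i / β) :=
  softmax_stability_general m β Δ hβ y y' hyy' j
end

section
/- Pure differential privacy of report-noisy-max with Gumbel noise. Let m ≥ 1, β > 0, Δ ≥ 0, and let y, y' : Fin m → ℝ satisfy |y(i) − y'(i)| ≤ Δ for all i. Let P be the product on (Fin m → ℝ) of m independent copies of the Gumbel measure with scale β. Then for every j ∈ Fin m, P({ z | ∀ i ≠ j, y(j) + z(j) > y(i) + z(i) }) ≤ exp(2Δ/β) · P({ z | ∀ i ≠ j, y'(j) + z(j) > y'(i) + z(i) }), i.e., reporting the index of the maximum Gumbel-perturbed score is (2Δ/β)-differentially private with respect to changes of the score vector of ℓ∞-magnitude at most Δ. -/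
open MeasureTheory Real

namespace MeasureTheory.Measure

variable {ι : Type*} [Fintype ι] {α : ι → Type*} [∀ i, MeasurableSpace (α i)]

theorem pi_mono {μ ν : ∀ i, Measure (α i)} (h : ∀ i, μ i ≤ ν i) :
    Measure.pi μ ≤ Measure.pi ν := by
  have houter : (OuterMeasure.pi fun i => (μ i).toOuterMeasure) ≤
      OuterMeasure.pi fun i => (ν i).toOuterMeasure := by
    unfold OuterMeasure.pi
    rw [OuterMeasure.le_boundedBy]
    exact fun s => (OuterMeasure.boundedBy_le s).trans
      (Finset.prod_le_prod' fun i _ => h i _)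
  refine le_iff.2 fun s hs => ?_
  rw [pi_def, pi_def, toMeasure_apply _ _ hs, toMeasure_apply _ _ hs]
  exact houter s

theorem pi_smul (μ : ∀ i, Measure (α i)) [∀ i, SigmaFinite (μ i)] {c : ι → ENNReal}
    (hc : ∀ i, c i ≠ ⊤) :
    Measure.pi (fun i => c i • μ i) = (∏ i, c i) • Measure.pi μ := by
  have : ∀ i, SigmaFinite (c i • μ i) := fun i => by
    rw [← ENNReal.coe_toNNReal (hc i)]
    exact SMul.sigmaFinite _
  refine pi_eq fun s _ => ?_
  simp only [smul_apply, pi_pi, smul_eq_mul, Finset.prod_mul_distrib]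

end MeasureTheory.Measure

section Translation

variable {G : Type*} [MeasurableSpace G] [AddGroup G] [MeasurableAdd G]
  (μ : Measure G) [μ.IsAddRightInvariant] {g : G → ENNReal}

theorem map_add_right_withDensity (hg : Measurable g) (c : G) :
    (μ.withDensity g).map (· + c) = μ.withDensity fun x => g (x - c) := by
  have hg_shift : Measurable fun x => g (x - c) := by
    simp_rw [sub_eq_add_neg]
    exact hg.comp (measurable_add_const (-c))
  ext s hs
  rw [Measure.map_apply (measurable_add_const c) hs, withDensity_apply _ hs,
    withDensity_apply _ (hs.preimage (measurable_add_const c))]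
  calc ∫⁻ x in (· + c) ⁻¹' s, g x ∂μ
      = ∫⁻ x in (· + c) ⁻¹' s, g (x + c - c) ∂μ := by simp
    _ = ∫⁻ x in s, g (x - c) ∂(μ.map (· + c)) :=
        (setLIntegral_map hs hg_shift (measurable_add_const c)).symm
    _ = ∫⁻ x in s, g (x - c) ∂μ := by rw [map_add_right_eq_self μ c]

theorem map_add_right_withDensity_le_smul (hg : Measurable g) {c : G} {k : ENNReal}
    (hk : ∀ x, g (x - c) ≤ k * g x) :
    (μ.withDensity g).map (· + c) ≤ k • μ.withDensity g := by
  rw [map_add_right_withDensity μ hg, ← withDensity_smul k hg]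
  exact withDensity_mono (Filter.Eventually.of_forall hk)

end Translation

noncomputable def gumbelDensity (β z : ℝ) : ℝ :=
  (1 / β) * exp (-z / β - exp (-z / β))

theorem gumbelMeasure_eq_withDensity (β : ℝ) :
    gumbelMeasure β = volume.withDensity fun z => ENNReal.ofReal (gumbelDensity β z) :=
  rfl

instance (β : ℝ) : SigmaFinite (gumbelMeasure β) :=
  SigmaFinite.withDensity_ofReal _

theorem gumbelDensity_sub_le {β c : ℝ} (hβ : 0 < β) (hc : 0 ≤ c) (x : ℝ) :
    gumbelDensity β (x - c) ≤ exp (c / β) * gumbelDensity β x := by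
  have hshift : -(x - c) / β = c / β + -x / β := by ring
  have hcβ : 0 ≤ c / β := div_nonneg hc hβ.le
  have htail : exp (-x / β) ≤ exp (-(x - c) / β) := exp_le_exp.2 (by linarith)
  calc gumbelDensity β (x - c)
      ≤ (1 / β) * exp (c / β + -x / β - exp (-x / β)) := by
        unfold gumbelDensity
        gcongr
        linarith
    _ = exp (c / β) * gumbelDensity β x := by
        rw [gumbelDensity, add_sub_assoc, exp_add]
        ring

theorem gumbelMeasure_map_add_le {β c : ℝ} (hβ : 0 < β) (hc : 0 ≤ c) :
    (gumbelMeasure β).map (· + c) ≤ ENNReal.ofReal (exp (c / β)) • gumbelMeasure β := by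
  rw [gumbelMeasure_eq_withDensity]
  refine map_add_right_withDensity_le_smul _ (by unfold gumbelDensity; fun_prop) fun x => ?_
  rw [← ENNReal.ofReal_mul (exp_nonneg _)]
  exact ENNReal.ofReal_le_ofReal (gumbelDensity_sub_le hβ hc x)

theorem pi_gumbelMeasure_map_add_le {ι : Type*} [Fintype ι] {β : ℝ} (hβ : 0 < β)
    {a : ι → ℝ} (ha : 0 ≤ a) :
    (Measure.pi fun _ : ι => gumbelMeasure β).map (· + a) ≤
      ENNReal.ofReal (exp ((∑ i, a i) / β)) • Measure.pi fun _ : ι => gumbelMeasure β := by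
  have : ∀ i, SigmaFinite ((gumbelMeasure β).map (· + a i)) := fun i =>
    (MeasurableEquiv.addRight (a i)).sigmaFinite_map
  calc (Measure.pi fun _ : ι => gumbelMeasure β).map (· + a)
      = Measure.pi fun i => (gumbelMeasure β).map (· + a i) :=
        Measure.pi_map_pi fun i => (measurable_add_const (a i)).aemeasurable
    _ ≤ Measure.pi fun i => ENNReal.ofReal (exp (a i / β)) • gumbelMeasure β :=
        Measure.pi_mono fun i => gumbelMeasure_map_add_le hβ (ha i)
    _ = _ := by
        rw [Measure.pi_smul _ fun _ => ENNReal.ofReal_ne_top,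
          ← ENNReal.ofReal_prod_of_nonneg fun _ _ => exp_nonneg _, ← exp_sum,
          Finset.sum_div]

def strictArgmaxSet {ι : Type*} (y : ι → ℝ) (j : ι) : Set (ι → ℝ) :=
  {z | ∀ i, i ≠ j → y j + z j > y i + z i}

theorem strictArgmaxSet_subset_preimage_add_single {ι : Type*} [DecidableEq ι]
    {y y' : ι → ℝ} {Δ : ℝ} (h : ∀ i, |y i - y' i| ≤ Δ) (j : ι) :
    strictArgmaxSet y j ⊆ (· + Pi.single j (2 * Δ)) ⁻¹' strictArgmaxSet y' j := by
  intro z hz i hij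
  have hi := abs_le.1 (h i)
  have hj := abs_le.1 (h j)
  have := hz i hij
  simp only [Pi.add_apply, Pi.single_eq_same, Pi.single_eq_of_ne hij]
  linarith

theorem reportNoisyMax_gumbel_pureDP_general (m : ℕ) (β Δ : ℝ)
    (hβ : 0 < β) (y y' : Fin m → ℝ) (hyy' : ∀ i, |y i - y' i| ≤ Δ)
    (j : Fin m) :
    Measure.pi (fun _ : Fin m => gumbelMeasure β)
        {z : Fin m → ℝ | ∀ i, i ≠ j → y j + z j > y i + z i} ≤
      ENNReal.ofReal (Real.exp (2 * Δ / β)) *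
        Measure.pi (fun _ : Fin m => gumbelMeasure β)
          {z : Fin m → ℝ | ∀ i, i ≠ j → y' j + z j > y' i + z i} := by
  have hΔ : 0 ≤ Δ := (abs_nonneg _).trans (hyy' j)
  set P := Measure.pi fun _ : Fin m => gumbelMeasure β
  set shift : Fin m → ℝ := Pi.single j (2 * Δ)
  change P (strictArgmaxSet y j) ≤ _ * P (strictArgmaxSet y' j)
  calc P (strictArgmaxSet y j)
      ≤ P ((· + shift) ⁻¹' strictArgmaxSet y' j) :=
        measure_mono (strictArgmaxSet_subset_preimage_add_single hyy' j)
    _ ≤ P.map (· + shift) (strictArgmaxSet y' j) := Measure.le_map_apply (by fun_prop) _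
    _ ≤ (ENNReal.ofReal (exp ((∑ i, shift i) / β)) • P) (strictArgmaxSet y' j) :=
        pi_gumbelMeasure_map_add_le hβ (Pi.single_nonneg.2 (by positivity)) _
    _ = _ := by simp [shift, Finset.sum_pi_single']

/-- Pure differential privacy of report-noisy-max with Gumbel noise: if the score
vectors `y, y'` differ by at most `Δ` in each coordinate, then the probability that
index `j` is the argmax of the Gumbel(β)-perturbed scores changes by a multiplicative
factor of at most `exp(2Δ/β)`. -/
theorem reportNoisyMax_gumbel_pureDP (m : ℕ) (hm : 1 ≤ m) (β Δ : ℝ)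
    (hβ : 0 < β) (hΔ : 0 ≤ Δ) (y y' : Fin m → ℝ) (hyy' : ∀ i, |y i - y' i| ≤ Δ)
    (j : Fin m) :
    Measure.pi (fun _ : Fin m => gumbelMeasure β)
        {z : Fin m → ℝ | ∀ i, i ≠ j → y j + z j > y i + z i} ≤
      ENNReal.ofReal (Real.exp (2 * Δ / β)) *
        Measure.pi (fun _ : Fin m => gumbelMeasure β)
          {z : Fin m → ℝ | ∀ i, i ≠ j → y' j + z j > y' i + z i} :=
  reportNoisyMax_gumbel_pureDP_general m β Δ hβ y y' hyy' j
end
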